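/- No transformation can be catalysed by a uniform state: if p ⊗ η_n majorises q ⊗ η_n, where η_n = (1/n,...,1/n), then already p majorises q. -/

import Mathlib

/-!
Write `p ⊗ η_n` as `(i, j) ↦ p i / n`. Its `k n` largest entries sum to the same value as the
`k` largest entries of `p`: a set of `k n` pairs meets each fibre `{i} × Fin n` in `c i ≤ n`
points, so its sum is `∑ i, p i * (c i / n)`, a fractional choice of `k` entries, and such a
choice never beats the best integral one (everything it moves off an optimal set `t` goes to
entries below a threshold that the entries of `t` exceed). Conversely `t × Fin n` attains the
value. So majorisation of the tensored vectors at level `k n` is majorisation at level `k`.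
-/

open Finset

/-- The sum of the `k` largest entries of `p` (as a supremum over subsets of size `k`). -/
noncomputable def sumLargest {ι : Type*} [Fintype ι] (p : ι → ℝ) (k : ℕ) : ℝ :=
  sSup {x : ℝ | ∃ s : Finset ι, s.card = k ∧ ∑ i ∈ s, p i = x}

/-- `p` majorises `q`: for every `k`, the sum of the `k` largest entries of `p`
is at least the sum of the `k` largest entries of `q`. -/
def Majorizes {ι : Type*} [Fintype ι] (p q : ι → ℝ) : Prop :=
  ∀ k : ℕ, k ≤ Fintype.card ι → sumLargest q k ≤ sumLargest p k

/-- A probability vector: nonnegative entries summing to 1. -/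
def IsProbVec {ι : Type*} [Fintype ι] (p : ι → ℝ) : Prop :=
  (∀ i, 0 ≤ p i) ∧ ∑ i, p i = 1

section sumLargest

variable {ι : Type*} [Fintype ι] (p : ι → ℝ)

lemma finite_setOf_sum_card_eq (k : ℕ) :
    {x : ℝ | ∃ s : Finset ι, s.card = k ∧ ∑ i ∈ s, p i = x}.Finite :=
  (Set.finite_range fun s : Finset ι => ∑ i ∈ s, p i).subset
    (by rintro _ ⟨s, -, rfl⟩; exact ⟨s, rfl⟩)

lemma sum_le_sumLargest (s : Finset ι) : ∑ i ∈ s, p i ≤ sumLargest p s.card :=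
  le_csSup (finite_setOf_sum_card_eq p _).bddAbove ⟨s, rfl, rfl⟩

lemma nonempty_setOf_sum_card_eq {k : ℕ} (hk : k ≤ Fintype.card ι) :
    {x : ℝ | ∃ s : Finset ι, s.card = k ∧ ∑ i ∈ s, p i = x}.Nonempty := by
  obtain ⟨s, -, hs⟩ := exists_subset_card_eq (s := (univ : Finset ι)) (by simpa using hk)
  exact ⟨_, s, hs, rfl⟩

lemma sumLargest_le {k : ℕ} (hk : k ≤ Fintype.card ι) {a : ℝ}
    (h : ∀ s : Finset ι, s.card = k → ∑ i ∈ s, p i ≤ a) : sumLargest p k ≤ a :=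
  csSup_le (nonempty_setOf_sum_card_eq p hk) (by rintro _ ⟨s, hs, rfl⟩; exact h s hs)

lemma exists_card_eq_sum_eq_sumLargest {k : ℕ} (hk : k ≤ Fintype.card ι) :
    ∃ t : Finset ι, t.card = k ∧ ∑ i ∈ t, p i = sumLargest p k :=
  (nonempty_setOf_sum_card_eq p hk).csSup_mem (finite_setOf_sum_card_eq p k)

lemma exists_sumLargest_threshold {k : ℕ} (hk : k ≤ Fintype.card ι) :
    ∃ t : Finset ι, t.card = k ∧ ∑ i ∈ t, p i = sumLargest p k ∧
      ∃ m : ℝ, (∀ i ∈ t, m ≤ p i) ∧ ∀ j ∉ t, p j ≤ m := by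
  classical
  obtain ⟨t, rfl, ht⟩ := exists_card_eq_sum_eq_sumLargest p hk
  -- swapping `j` in for `i` cannot beat the maximum
  have exchange : ∀ i ∈ t, ∀ j ∉ t, p j ≤ p i := by
    intro i hi j hj
    have hj' : j ∉ t.erase i := fun h => hj (mem_of_mem_erase h)
    have hcard : (insert j (t.erase i)).card = t.card := by
      rw [card_insert_of_notMem hj', card_erase_add_one hi]
    have := sum_le_sumLargest p (insert j (t.erase i))
    rw [hcard, ← ht, sum_insert hj', sum_erase_eq_sub hi] at this
    linarith
  refine ⟨t, rfl, ht, ?_⟩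
  by_cases htne : t.Nonempty
  · obtain ⟨i₀, hi₀, hmin⟩ := exists_mem_eq_inf' htne p
    exact ⟨t.inf' htne p, fun i hi => inf'_le p hi,
      fun j hj => hmin ▸ exchange i₀ hi₀ j hj⟩
  · obtain ⟨M, hM⟩ := (Set.finite_range p).bddAbove
    exact ⟨M, fun i hi => (htne ⟨i, hi⟩).elim, fun j _ => hM ⟨j, rfl⟩⟩

lemma sum_mul_le_sumLargest {w : ι → ℝ} (hw₀ : ∀ i, 0 ≤ w i) (hw₁ : ∀ i, w i ≤ 1) {k : ℕ}
    (hw : ∑ i, w i = k) : ∑ i, p i * w i ≤ sumLargest p k := by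
  classical
  have hk : k ≤ Fintype.card ι := by
    have : ∑ i, w i ≤ ∑ _i : ι, (1 : ℝ) := sum_le_sum fun i _ => hw₁ i
    rw [hw, sum_const, card_univ, nsmul_one] at this
    exact_mod_cast this
  obtain ⟨t, htk, ht, m, hmt, hmtc⟩ := exists_sumLargest_threshold p hk
  have hmass : ∑ i ∈ tᶜ, w i = ∑ i ∈ t, (1 - w i) := by
    have := sum_add_sum_compl t w
    rw [sum_sub_distrib, sum_const, nsmul_one, htk]
    linarith
  calc ∑ i, p i * w i = ∑ i ∈ t, p i * w i + ∑ i ∈ tᶜ, p i * w i :=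
        (sum_add_sum_compl t _).symm
    _ ≤ ∑ i ∈ t, p i * w i + ∑ i ∈ tᶜ, m * w i := by
        gcongr with i hi
        · exact hw₀ i
        · exact hmtc i (mem_compl.mp hi)
    _ = ∑ i ∈ t, p i * w i + ∑ i ∈ t, m * (1 - w i) := by rw [← mul_sum, ← mul_sum, hmass]
    _ ≤ ∑ i ∈ t, p i * w i + ∑ i ∈ t, p i * (1 - w i) := by
        gcongr with i hi
        · linarith [hw₁ i]
        · exact hmt i hi
    _ = sumLargest p k := by
        rw [← sum_add_distrib, ← ht]
        simp only [mul_sub, mul_one, add_sub_cancel]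

end sumLargest

lemma card_filter_fst_eq_le_card {ι κ : Type*} [Fintype κ] [DecidableEq ι]
    (s : Finset (ι × κ)) (i : ι) :
    #{x ∈ s | x.1 = i} ≤ Fintype.card κ :=
  card_le_card_of_injOn Prod.snd (fun _ _ => mem_coe.mpr (mem_univ _))
    fun _ hx _ hy hxy => Prod.ext ((mem_filter.mp hx).2.trans (mem_filter.mp hy).2.symm) hxy

section tensor

variable {ι κ : Type*} [Fintype ι] [Fintype κ]

theorem sumLargest_tensor_uniform [Nonempty κ] (p : ι → ℝ) {k : ℕ} (hk : k ≤ Fintype.card ι) :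
    sumLargest (fun x : ι × κ => p x.1 * (Fintype.card κ : ℝ)⁻¹) (k * Fintype.card κ) =
      sumLargest p k := by
  classical
  have hκ : (0 : ℝ) < Fintype.card κ := Nat.cast_pos.mpr Fintype.card_pos
  apply le_antisymm
  · refine sumLargest_le _ (by simpa [Fintype.card_prod] using Nat.mul_le_mul_right _ hk) ?_
    intro s hs
    set w : ι → ℝ := fun i => #{x ∈ s | x.1 = i} / Fintype.card κ
    have hsum : ∑ x ∈ s, p x.1 * (Fintype.card κ : ℝ)⁻¹ = ∑ i, p i * w i := by
      rw [← sum_fiberwise' s Prod.fst fun i => p i * (Fintype.card κ : ℝ)⁻¹]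
      simp only [sum_const, nsmul_eq_mul, w]
      exact sum_congr rfl fun i _ => by ring
    rw [hsum]
    refine sum_mul_le_sumLargest p (fun i => by positivity) (fun i => ?_) ?_
    · exact (div_le_one hκ).mpr (Nat.cast_le.mpr (card_filter_fst_eq_le_card s i))
    · have hfibres : ∑ i, #{x ∈ s | x.1 = i} = #s :=
        (card_eq_sum_card_fiberwise fun x _ => mem_coe.mpr (mem_univ x.1)).symm
      rw [← sum_div, ← Nat.cast_sum, hfibres, hs, Nat.cast_mul]
      field_simp
  · obtain ⟨t, rfl, ht⟩ := exists_card_eq_sum_eq_sumLargest p hk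
    have hsum :
        ∑ x ∈ t ×ˢ (univ : Finset κ), p x.1 * (Fintype.card κ : ℝ)⁻¹ = ∑ i ∈ t, p i := by
      rw [sum_product]
      refine sum_congr rfl fun i _ => ?_
      simp only [sum_const, card_univ, nsmul_eq_mul]
      field_simp
    have := sum_le_sumLargest (fun x : ι × κ => p x.1 * (Fintype.card κ : ℝ)⁻¹) (t ×ˢ univ)
    rwa [hsum, ht, card_product, card_univ] at this

end tensor

theorem uniform_catalyst_useless_general {d n : ℕ} (hn : 0 < n)
    (p q : Fin d → ℝ)
    (h : Majorizes (fun x : Fin d × Fin n => p x.1 * (n : ℝ)⁻¹)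
      (fun x : Fin d × Fin n => q x.1 * (n : ℝ)⁻¹)) :
    Majorizes p q := by
  have : Nonempty (Fin n) := Fin.pos_iff_nonempty.mp hn
  intro k hk
  have htensor := h (k * n) (by simpa using Nat.mul_le_mul_right n hk)
  have hp := sumLargest_tensor_uniform (κ := Fin n) p hk
  have hq := sumLargest_tensor_uniform (κ := Fin n) q hk
  simp only [Fintype.card_fin] at hp hq
  rwa [hp, hq] at htensor

/-- No transformation can be catalysed by a uniform state: if `p ⊗ η_n` majorises
`q ⊗ η_n`, then already `p` majorises `q`. -/
theorem uniform_catalyst_useless {d n : ℕ} (hn : 0 < n)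
    (p q : Fin d → ℝ) (hp : IsProbVec p) (hq : IsProbVec q)
    (h : Majorizes (fun x : Fin d × Fin n => p x.1 * (n : ℝ)⁻¹)
      (fun x : Fin d × Fin n => q x.1 * (n : ℝ)⁻¹)) :
    Majorizes p q :=
  uniform_catalyst_useless_general hn p q h
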